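/- arXiv:1201.3586 — 2 statements merged into one kernel-verified Lean document; each statement's English description precedes it below -/
import Mathlib

section
/- Let α > 0, p > 1, λ = 8, and let μ be a nonnegative Borel measure on a Carnot group G of homogeneous dimension M. For any negative integer m and any r > 0, one has the pointwise upper bound ∫_{λ^m r}^r [μ(B_t(x))/t^{M-αp}]^{1/(p-1)} dt/t ≤ C Σ_{Q ∈ D_{m+[log_λ r]}, ℓ(Q) ≤ r} [μ(Q**)/|Q|^{1-αp/M}]^{1/(p-1)} χ_Q(x), where Q** = B_{2λ^{k+2}}(x_j^k) for Q = E_j^k, and C depends only on M, p, α. -/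
/-!
Split `(λ^m r, r)` into the pieces `[λ^k, λ^{k+1})`; only generations `k ≥ m + [log_λ r]` with
`λ^k < r` meet it. For `t` in such a piece, the cube `Q` of generation `k` containing `x` satisfies
`B_t(x) ⊆ Q**`, and `B_{λ^k} ⊆ Q ⊆ B_{λ^{k+1}}` makes `|Q|` comparable to `t^M` up to the factor
`λ^M`, whatever the sign of the exponent `1 - αp/M`. So on the piece the integrand is at most a
constant times the term of `Q`, while `dt/t` gives the piece mass at most `λ`; distinct pieces
give distinct cubes.
-/

open MeasureTheory ENNReal Set

/-- A dyadic cube decomposition of a metric measure space (Sawyer–Wheeden/Christ). -/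
structure MetricDyadicGrid (X : Type*) [MetricSpace X] [MeasurableSpace X] (lam : ℝ) where
  ι : Type
  countable : Countable ι
  cube : ι → Set X
  gen : ι → ℤ
  base : ℤ
  base_le : ∀ i, base ≤ gen i
  measurableSet : ∀ i, MeasurableSet (cube i)
  pairwise_disjoint : ∀ i j, i ≠ j → gen i = gen j → Disjoint (cube i) (cube j)
  cover : ∀ k : ℤ, base ≤ k → (⋃ i ∈ {i | gen i = k}, cube i) = Set.univ
  nested : ∀ i j, gen i ≤ gen j → cube i ⊆ cube j ∨ Disjoint (cube i) (cube j)
  center : ι → X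
  ball_subset : ∀ i, Metric.ball (center i) (lam ^ gen i) ⊆ cube i
  subset_ball : ∀ i, cube i ⊆ Metric.ball (center i) (lam ^ (gen i + 1))

open Metric

namespace ENNReal

theorem inv_le_mul_inv_of_le_mul {a b c : ℝ≥0∞} (hc₀ : c ≠ 0) (hc : c ≠ ∞) (h : b ≤ c * a) :
    a⁻¹ ≤ c * b⁻¹ :=
  calc a⁻¹ = c * (c * a)⁻¹ := by
        rw [ENNReal.mul_inv (.inl hc₀) (.inl hc), ← mul_assoc, ENNReal.mul_inv_cancel hc₀ hc,
          one_mul]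
    _ ≤ c * b⁻¹ := by gcongr

theorem rpow_le_rpow_abs_mul_rpow {a b c : ℝ≥0∞} {e : ℝ} (hc₀ : c ≠ 0) (hc : c ≠ ∞)
    (hab : a ≤ c * b) (hba : b ≤ c * a) : a ^ e ≤ c ^ |e| * b ^ e := by
  rcases le_or_gt 0 e with he | he
  · rw [abs_of_nonneg he, ← mul_rpow_of_nonneg _ _ he]
    exact rpow_le_rpow hab he
  · calc a ^ e = a⁻¹ ^ (-e) := by rw [inv_rpow, ← rpow_neg, neg_neg]
      _ ≤ (c * b⁻¹) ^ (-e) := rpow_le_rpow (inv_le_mul_inv_of_le_mul hc₀ hc hba) (by linarith)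
      _ = c ^ |e| * b ^ e := by
        rw [mul_rpow_of_nonneg _ _ (by linarith), abs_of_neg he, inv_rpow, ← rpow_neg, neg_neg]

theorem div_le_mul_div_of_le_mul {a b c d : ℝ≥0∞} (hc₀ : c ≠ 0) (hc : c ≠ ∞) (h : b ≤ c * a) :
    d / a ≤ c * (d / b) :=
  calc d / a = d * a⁻¹ := div_eq_mul_inv d a
    _ ≤ d * (c * b⁻¹) := by gcongr; exact inv_le_mul_inv_of_le_mul hc₀ hc h
    _ = c * (d / b) := by rw [div_eq_mul_inv]; ring

end ENNReal

namespace Real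

theorem zpow_floor_logb_le_self {b x : ℝ} (hb : 1 < b) (hx : 0 < x) : b ^ ⌊logb b x⌋ ≤ x :=
  calc b ^ ⌊logb b x⌋ = b ^ (⌊logb b x⌋ : ℝ) := (rpow_intCast b _).symm
    _ ≤ b ^ logb b x := rpow_le_rpow_of_exponent_le hb.le (Int.floor_le _)
    _ = x := rpow_logb (by linarith) hb.ne' hx

theorem lt_zpow_floor_logb_add_one {b x : ℝ} (hb : 1 < b) (hx : 0 < x) :
    x < b ^ (⌊logb b x⌋ + 1) :=
  calc x = b ^ logb b x := (rpow_logb (by linarith) hb.ne' hx).symm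
    _ < b ^ ((⌊logb b x⌋ + 1 : ℤ) : ℝ) := by
      apply rpow_lt_rpow_of_exponent_lt hb
      push_cast
      exact Int.lt_floor_add_one _
    _ = b ^ (⌊logb b x⌋ + 1) := rpow_intCast b _

theorem Ioo_subset_iUnion_Ico_zpow {b a r : ℝ} (hb : 1 < b) (ha : 0 < a) :
    Ioo a r ⊆ ⋃ k : {k : ℤ | a < b ^ (k + 1) ∧ b ^ k < r}, Ico (b ^ (k : ℤ)) (b ^ (k : ℤ) * b) := by
  intro t ⟨hat, htr⟩
  have ht : 0 < t := ha.trans hat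
  have hlow := zpow_floor_logb_le_self hb ht
  have hup := lt_zpow_floor_logb_add_one hb ht
  refine mem_iUnion.2 ⟨⟨⌊logb b t⌋, hat.trans hup, hlow.trans_lt htr⟩, hlow, ?_⟩
  rwa [← zpow_add_one₀ (by linarith)]

end Real

theorem setLIntegral_Ico_mul_inv_le {f : ℝ → ℝ≥0∞} {a b : ℝ} {B : ℝ≥0∞} (ha : 0 < a)
    (hf : ∀ t ∈ Ico a (a * b), f t ≤ B) :
    ∫⁻ t in Ico a (a * b), f t * ENNReal.ofReal t⁻¹ ≤ ENNReal.ofReal b * B := by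
  have hbound : ∀ t ∈ Ico a (a * b), f t * ENNReal.ofReal t⁻¹ ≤ B * ENNReal.ofReal a⁻¹ :=
    fun t ht => mul_le_mul' (hf t ht) (ENNReal.ofReal_le_ofReal (inv_anti₀ ha ht.1))
  calc ∫⁻ t in Ico a (a * b), f t * ENNReal.ofReal t⁻¹
      ≤ ∫⁻ _ in Ico a (a * b), B * ENNReal.ofReal a⁻¹ := setLIntegral_mono' measurableSet_Ico hbound
    _ = B * ENNReal.ofReal a⁻¹ * ENNReal.ofReal (a * b - a) := by
      rw [setLIntegral_const, Real.volume_Ico]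
    _ ≤ B * ENNReal.ofReal a⁻¹ * ENNReal.ofReal (a * b) := by
      gcongr; linarith
    _ = ENNReal.ofReal b * B := by
      rw [mul_assoc, ← ENNReal.ofReal_mul (by positivity), inv_mul_cancel_left₀ ha.ne', mul_comm]

namespace MetricDyadicGrid

variable {X : Type*} [MetricSpace X] [MeasurableSpace X] {lam : ℝ} (D : MetricDyadicGrid X lam)

theorem exists_cube_mem (x : X) {k : ℤ} (hk : D.base ≤ k) : ∃ i, D.gen i = k ∧ x ∈ D.cube i := by
  have hx : x ∈ ⋃ i ∈ {i | D.gen i = k}, D.cube i := D.cover k hk ▸ mem_univ x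
  simpa using hx

theorem ball_subset_ball_enlarged {i : D.ι} {x : X} {t : ℝ} (hlam : 1 ≤ lam)
    (hx : x ∈ D.cube i) (ht : t ≤ lam ^ (D.gen i + 1)) :
    ball x t ⊆ ball (D.center i) (2 * lam ^ (D.gen i + 2)) := by
  have hdist : dist x (D.center i) < lam ^ (D.gen i + 1) := D.subset_ball i hx
  have hmono : lam ^ (D.gen i + 1) ≤ lam ^ (D.gen i + 2) := zpow_le_zpow_right₀ hlam (by omega)
  exact ball_subset_ball' (by linarith)

theorem tsum_le_tsum_indicator_cubes {r : ℝ} {S : Set ℤ} (hS : ∀ k ∈ S, lam ^ k ≤ r)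
    (sel : S → D.ι) (hgen : ∀ k, D.gen (sel k) = k) {x : X} (hx : ∀ k, x ∈ D.cube (sel k))
    (F : D.ι → ℝ≥0∞) :
    ∑' k : S, F (sel k) ≤
      ∑' Q : {Q : D.ι // lam ^ D.gen Q ≤ r}, (D.cube Q.1).indicator (fun _ => F Q.1) x := by
  have hsel : ∀ k : S, lam ^ D.gen (sel k) ≤ r := fun k => (hgen k).symm ▸ hS k k.2
  have hinj : Function.Injective
      fun k : S => (⟨sel k, hsel k⟩ : {Q : D.ι // lam ^ D.gen Q ≤ r}) := by
    intro k l hkl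
    have h := congrArg (fun Q : {Q : D.ι // lam ^ D.gen Q ≤ r} => D.gen Q.1) hkl
    simp only [hgen] at h
    exact Subtype.ext h
  calc ∑' k : S, F (sel k) = ∑' k : S, (D.cube (sel k)).indicator (fun _ => F (sel k)) x := by
        simp only [indicator_of_mem (hx _)]
    _ ≤ _ := ENNReal.tsum_comp_le_tsum_of_injective hinj
        (fun Q => (D.cube Q.1).indicator (fun _ => F Q.1) x)

section Volume

variable {vol : Measure X} {cA : ℝ≥0∞} {M : ℝ}

theorem measure_cube_le
    (hvol : ∀ (x : X) (R : ℝ), 0 < R → vol (ball x R) = cA * ENNReal.ofReal (R ^ M))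
    (hM : 0 ≤ M) (hlam : 0 < lam) {i : D.ι} {t : ℝ} (ht : lam ^ D.gen i ≤ t) :
    vol (D.cube i) ≤ ENNReal.ofReal (lam ^ M) * (cA * ENNReal.ofReal (t ^ M)) := by
  have hk := zpow_pos hlam (D.gen i)
  calc vol (D.cube i) ≤ vol (ball (D.center i) (lam ^ D.gen i * lam)) := by
        rw [← zpow_add_one₀ hlam.ne']; exact measure_mono (D.subset_ball i)
    _ = cA * ENNReal.ofReal ((lam ^ D.gen i) ^ M * lam ^ M) := by
        rw [hvol _ _ (mul_pos hk hlam), Real.mul_rpow hk.le hlam.le]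
    _ ≤ cA * ENNReal.ofReal (t ^ M * lam ^ M) := by
        gcongr
    _ = ENNReal.ofReal (lam ^ M) * (cA * ENNReal.ofReal (t ^ M)) := by
        rw [ENNReal.ofReal_mul (Real.rpow_nonneg (hk.le.trans ht) M)]; ring

theorem le_measure_cube
    (hvol : ∀ (x : X) (R : ℝ), 0 < R → vol (ball x R) = cA * ENNReal.ofReal (R ^ M))
    (hM : 0 ≤ M) (hlam : 0 < lam) {i : D.ι} {t : ℝ} (ht0 : 0 < t)
    (ht : t ≤ lam ^ (D.gen i + 1)) :
    cA * ENNReal.ofReal (t ^ M) ≤ ENNReal.ofReal (lam ^ M) * vol (D.cube i) := by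
  have hk := zpow_pos hlam (D.gen i)
  calc cA * ENNReal.ofReal (t ^ M) ≤ cA * ENNReal.ofReal ((lam ^ D.gen i) ^ M * lam ^ M) := by
        rw [← Real.mul_rpow hk.le hlam.le, ← zpow_add_one₀ hlam.ne']
        gcongr
    _ = ENNReal.ofReal (lam ^ M) * vol (ball (D.center i) (lam ^ D.gen i)) := by
        rw [hvol _ _ hk, ENNReal.ofReal_mul (by positivity)]; ring
    _ ≤ ENNReal.ofReal (lam ^ M) * vol (D.cube i) := by
        gcongr; exact D.ball_subset i

theorem rpow_measure_cube_le
    (hvol : ∀ (x : X) (R : ℝ), 0 < R → vol (ball x R) = cA * ENNReal.ofReal (R ^ M))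
    (hM : 0 ≤ M) (hlam : 0 < lam) (hcA : cA ≠ 0) {i : D.ι} {t : ℝ}
    (ht₁ : lam ^ D.gen i ≤ t) (ht₂ : t ≤ lam ^ (D.gen i + 1)) (e : ℝ) :
    vol (D.cube i) ^ e ≤
      cA ^ e * ENNReal.ofReal (lam ^ M) ^ |e| * ENNReal.ofReal (t ^ (M * e)) := by
  have ht0 : 0 < t := (zpow_pos hlam _).trans_le ht₁
  have htM : 0 < t ^ M := Real.rpow_pos_of_pos ht0 M
  have hlamM : ENNReal.ofReal (lam ^ M) ≠ 0 :=
    (ENNReal.ofReal_pos.2 (Real.rpow_pos_of_pos hlam M)).ne'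
  calc vol (D.cube i) ^ e ≤ ENNReal.ofReal (lam ^ M) ^ |e| * (cA * ENNReal.ofReal (t ^ M)) ^ e :=
        ENNReal.rpow_le_rpow_abs_mul_rpow hlamM ENNReal.ofReal_ne_top
          (D.measure_cube_le hvol hM hlam ht₁) (D.le_measure_cube hvol hM hlam ht0 ht₂)
    _ = cA ^ e * ENNReal.ofReal (lam ^ M) ^ |e| * ENNReal.ofReal (t ^ (M * e)) := by
        rw [ENNReal.mul_rpow_of_ne_zero hcA (ENNReal.ofReal_pos.2 htM).ne',
          ENNReal.ofReal_rpow_of_pos htM, ← Real.rpow_mul ht0.le]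
        ring

theorem measure_ball_div_rpow_le
    (hvol : ∀ (x : X) (R : ℝ), 0 < R → vol (ball x R) = cA * ENNReal.ofReal (R ^ M))
    (hM : 0 ≤ M) (hlam : 1 ≤ lam) (hcA₀ : cA ≠ 0) (hcA : cA ≠ ∞) (μ : Measure X)
    {i : D.ι} {x : X} (hx : x ∈ D.cube i) {t : ℝ}
    (ht₁ : lam ^ D.gen i ≤ t) (ht₂ : t ≤ lam ^ (D.gen i + 1)) (e : ℝ) :
    μ (ball x t) / ENNReal.ofReal (t ^ (M * e)) ≤
      cA ^ e * ENNReal.ofReal (lam ^ M) ^ |e| *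
        (μ (ball (D.center i) (2 * lam ^ (D.gen i + 2))) / vol (D.cube i) ^ e) := by
  have hlamM : 0 < ENNReal.ofReal (lam ^ M) :=
    ENNReal.ofReal_pos.2 (Real.rpow_pos_of_pos (by linarith) M)
  calc μ (ball x t) / ENNReal.ofReal (t ^ (M * e))
      ≤ μ (ball (D.center i) (2 * lam ^ (D.gen i + 2))) / ENNReal.ofReal (t ^ (M * e)) := by
        gcongr; exact D.ball_subset_ball_enlarged hlam hx ht₂
    _ ≤ _ := by
        refine ENNReal.div_le_mul_div_of_le_mul ?_ ?_
          (D.rpow_measure_cube_le hvol hM (by linarith) hcA₀ ht₁ ht₂ e)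
        · exact mul_ne_zero (ENNReal.rpow_pos (pos_iff_ne_zero.2 hcA₀) hcA).ne'
            (ENNReal.rpow_pos hlamM ENNReal.ofReal_ne_top).ne'
        · exact ENNReal.mul_ne_top (ENNReal.rpow_ne_top_of_ne_zero hcA₀ hcA)
            (ENNReal.rpow_ne_top_of_nonneg (abs_nonneg e) ENNReal.ofReal_ne_top)

theorem lintegral_le_tsum_cubes
    (hvol : ∀ (x : X) (R : ℝ), 0 < R → vol (ball x R) = cA * ENNReal.ofReal (R ^ M))
    (hM : 0 ≤ M) (hlam : 1 < lam) (hcA₀ : cA ≠ 0) (hcA : cA ≠ ∞) {e s : ℝ} (hs : 0 ≤ s)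
    {m : ℤ} {r : ℝ} (hr : 0 < r) (hbase : D.base = m + ⌊Real.logb lam r⌋)
    (μ : Measure X) (x : X) :
    ∫⁻ t in Ioo (lam ^ m * r) r,
        (μ (ball x t) / ENNReal.ofReal (t ^ (M * e))) ^ s * ENNReal.ofReal t⁻¹ ≤
      (cA ^ e * ENNReal.ofReal (lam ^ M) ^ |e|) ^ s * ENNReal.ofReal lam *
        ∑' Q : {Q : D.ι // lam ^ D.gen Q ≤ r}, (D.cube Q.1).indicator
          (fun _ => (μ (ball (D.center Q.1) (2 * lam ^ (D.gen Q.1 + 2))) /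
            vol (D.cube Q.1) ^ e) ^ s) x := by
  set K := cA ^ e * ENNReal.ofReal (lam ^ M) ^ |e|
  set T := {k : ℤ | lam ^ m * r < lam ^ (k + 1) ∧ lam ^ k < r}
  have hlam0 : 0 < lam := by linarith
  have hbase_le : ∀ k ∈ T, D.base ≤ k := by
    intro k hk
    have h : lam ^ D.base < lam ^ (k + 1) :=
      calc lam ^ D.base = lam ^ m * lam ^ ⌊Real.logb lam r⌋ := by
            rw [hbase, zpow_add₀ hlam0.ne']
        _ ≤ lam ^ m * r := by gcongr; exact Real.zpow_floor_logb_le_self hlam hr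
        _ < lam ^ (k + 1) := hk.1
    have := (zpow_lt_zpow_iff_right₀ hlam).1 h
    omega
  choose sel hgen hmem using fun k : T => D.exists_cube_mem x (hbase_le k k.2)
  set F : D.ι → ℝ≥0∞ := fun i =>
    (μ (ball (D.center i) (2 * lam ^ (D.gen i + 2))) / vol (D.cube i) ^ e) ^ s
  set f : ℝ → ℝ≥0∞ := fun t =>
    (μ (ball x t) / ENNReal.ofReal (t ^ (M * e))) ^ s * ENNReal.ofReal t⁻¹
  have hpiece : ∀ k : T, ∫⁻ t in Ico (lam ^ (k : ℤ)) (lam ^ (k : ℤ) * lam), f t ≤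
      ENNReal.ofReal lam * (K ^ s * F (sel k)) := by
    intro k
    refine setLIntegral_Ico_mul_inv_le (zpow_pos hlam0 _) fun t ht => ?_
    rw [← hgen k, ← zpow_add_one₀ hlam0.ne'] at ht
    rw [← ENNReal.mul_rpow_of_nonneg _ _ hs]
    gcongr
    exact D.measure_ball_div_rpow_le hvol hM hlam.le hcA₀ hcA μ (hmem k) ht.1 ht.2.le e
  calc ∫⁻ t in Ioo (lam ^ m * r) r, f t
      ≤ ∫⁻ t in ⋃ k : T, Ico (lam ^ (k : ℤ)) (lam ^ (k : ℤ) * lam), f t :=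
        lintegral_mono_set (Real.Ioo_subset_iUnion_Ico_zpow hlam (by positivity))
    _ ≤ ∑' k : T, ∫⁻ t in Ico (lam ^ (k : ℤ)) (lam ^ (k : ℤ) * lam), f t :=
        lintegral_iUnion_le _ _
    _ ≤ ∑' k : T, ENNReal.ofReal lam * (K ^ s * F (sel k)) := ENNReal.tsum_le_tsum hpiece
    _ = K ^ s * ENNReal.ofReal lam * ∑' k : T, F (sel k) := by
        rw [ENNReal.tsum_mul_left, ENNReal.tsum_mul_left]; ring
    _ ≤ _ := by
        gcongr
        exact D.tsum_le_tsum_indicator_cubes (fun k hk => hk.2.le) sel hgen hmem F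

end Volume

end MetricDyadicGrid

theorem stmt_5_general (M α p lam : ℝ) (cA : ℝ≥0∞) (hp : 1 < p) (hM : 0 < M)
    (hlam : lam = 8) (hcA : 0 < cA) (hcA' : cA < ∞) :
    ∃ C : ℝ≥0∞, 0 < C ∧ C < ∞ ∧
      ∀ (G : Type) (_ : MetricSpace G) (mG : MeasurableSpace G) (_ : BorelSpace G)
        (vol : Measure G)
        (_ : ∀ (x : G) (R : ℝ), 0 < R → vol (Metric.ball x R) = cA * ENNReal.ofReal (R ^ M))
        (m : ℤ) (_ : m < 0) (r : ℝ) (_ : 0 < r)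
        (D : MetricDyadicGrid G lam) (_ : D.base = m + ⌊Real.logb lam r⌋)
        (μ : Measure G) (x : G),
        (∫⁻ t in Set.Ioo (lam ^ m * r) r,
            (μ (Metric.ball x t) / ENNReal.ofReal (t ^ (M - α * p))) ^ (1 / (p - 1)) *
              ENNReal.ofReal t⁻¹) ≤
          C * ∑' Q : {Q : D.ι // lam ^ D.gen Q ≤ r},
            Set.indicator (D.cube Q.1)
              (fun _ =>
                (μ (Metric.ball (D.center Q.1) (2 * lam ^ (D.gen Q.1 + 2))) /
                  (vol (D.cube Q.1)) ^ (1 - α * p / M)) ^ (1 / (p - 1))) x := by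
  set e := 1 - α * p / M
  set K := cA ^ e * ENNReal.ofReal (lam ^ M) ^ |e|
  have hlam1 : 1 < lam := by norm_num [hlam]
  have hs : 0 < 1 / (p - 1) := one_div_pos.2 (by linarith)
  have hK₀ : K ≠ 0 := mul_ne_zero (ENNReal.rpow_pos hcA hcA'.ne).ne'
    (ENNReal.rpow_pos (ENNReal.ofReal_pos.2 (by positivity)) ENNReal.ofReal_ne_top).ne'
  have hK : K ≠ ∞ := ENNReal.mul_ne_top (ENNReal.rpow_ne_top_of_ne_zero hcA.ne' hcA'.ne)
    (ENNReal.rpow_ne_top_of_nonneg (abs_nonneg e) ENNReal.ofReal_ne_top)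
  have hexp : M - α * p = M * e := by simp only [e]; field_simp
  refine ⟨K ^ (1 / (p - 1)) * ENNReal.ofReal lam,
    ENNReal.mul_pos (ENNReal.rpow_pos (pos_iff_ne_zero.2 hK₀) hK).ne'
      (ENNReal.ofReal_pos.2 (by linarith)).ne',
    ENNReal.mul_lt_top (ENNReal.rpow_lt_top_of_nonneg hs.le hK) ENNReal.ofReal_lt_top, ?_⟩
  intro G _ _ _ vol hvol m _ r hr D hbase μ x
  rw [hexp]
  exact D.lintegral_le_tsum_cubes hvol hM.le hlam1 hcA.ne' hcA'.ne hs.le hr hbase μ x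

/-- Pointwise upper bound for the truncated Wolff-type integral
`∫_{λ^m r}^r [μ(B_t(x))/t^{M-αp}]^{1/(p-1)} dt/t` by a discrete dyadic sum involving the
enlarged balls `Q** = B_{2λ^{k+2}}(x_j^k)`, over the grid `D_{m+[log_λ r]}`. -/
theorem stmt_5 (M α p lam : ℝ) (cA : ℝ≥0∞) (hα : 0 < α) (hp : 1 < p) (hM : 0 < M)
    (hlam : lam = 8) (hcA : 0 < cA) (hcA' : cA < ∞) :
    ∃ C : ℝ≥0∞, 0 < C ∧ C < ∞ ∧
      ∀ (G : Type) (_ : MetricSpace G) (mG : MeasurableSpace G) (_ : BorelSpace G)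
        (vol : Measure G)
        (_ : ∀ (x : G) (R : ℝ), 0 < R → vol (Metric.ball x R) = cA * ENNReal.ofReal (R ^ M))
        (m : ℤ) (_ : m < 0) (r : ℝ) (_ : 0 < r)
        (D : MetricDyadicGrid G lam) (_ : D.base = m + ⌊Real.logb lam r⌋)
        (μ : Measure G) (x : G),
        (∫⁻ t in Set.Ioo (lam ^ m * r) r,
            (μ (Metric.ball x t) / ENNReal.ofReal (t ^ (M - α * p))) ^ (1 / (p - 1)) *
              ENNReal.ofReal t⁻¹) ≤
          C * ∑' Q : {Q : D.ι // lam ^ D.gen Q ≤ r},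
            Set.indicator (D.cube Q.1)
              (fun _ =>
                (μ (Metric.ball (D.center Q.1) (2 * lam ^ (D.gen Q.1 + 2))) /
                  (vol (D.cube Q.1)) ^ (1 - α * p / M)) ^ (1 / (p - 1))) x :=
  stmt_5_general M α p lam cA hp hM hlam hcA hcA'
end

section
/- Let G be a Carnot group of homogeneous dimension M, α > 0, p > 1, q > p - 1, 0 < r < ∞, λ = 8. For any nonnegative Borel measure μ on G, ∫_G [μ(B_{λ^3 r}(x))/r^{M-αp}]^{q/(p-1)} dx ≤ C ∫_G [W_{α,p}^r μ(x)]^q dx, with C independent of r and μ. -/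
/-!
For `t ∈ (r/2, r)` the integrand of `W_{α,p}^r μ(x)` is at least a fixed multiple of
`[μ(B_{r/2}(x)) / r^{M-αp}]^{1/(p-1)} / r`, so `W_{α,p}^r μ(x)^q` dominates
`[μ(B_{r/2}(x)) / r^{M-αp}]^{q/(p-1)}` pointwise. It remains to shrink the radius from `512 r` to
`r/2` inside the integral. Instead of dyadic cubes we use a maximal `r/4`-separated subset of
`B_{512r}(x)`: the disjoint balls of radius `r/8` around its points lie in a ball of radius
`512 r + r/8`, so by the volume law `|B_R| = c R^M` it has at most `4097^M` points. Hence
`μ(B_{512r}(x)) ≤ 4097^M μ(B̄_{r/4}(y))` for one of them, and `B̄_{r/4}(y) ⊆ B_{r/2}(z)` for every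
`z ∈ B_{r/4}(y)`. Averaging over `B_{r/4}(y)` and integrating in `x` (Tonelli) bounds
`∫ μ(B_{512r})^{q/(p-1)}` by a constant times `∫ μ(B_{r/2})^{q/(p-1)}`.
-/

open MeasureTheory ENNReal Set

/-- The truncated Wolff potential
`W_{α,p}^r μ(x) = ∫_0^r [μ(B_t(x))/t^{M-αp}]^{1/(p-1)} dt/t`. -/
noncomputable def wolffPot {G : Type*} [MetricSpace G] [MeasurableSpace G]
    (μ : Measure G) (α p M r : ℝ) (x : G) : ℝ≥0∞ :=
  ∫⁻ t in Set.Ioo (0 : ℝ) r,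
    (μ (Metric.ball x t) / ENNReal.ofReal (t ^ (M - α * p))) ^ (1 / (p - 1)) *
      ENNReal.ofReal t⁻¹

open Metric TopologicalSpace

lemma measurable_measure_ball {G : Type*} [MetricSpace G] [MeasurableSpace G]
    [OpensMeasurableSpace G] (μ : Measure G) (c : ℝ) : Measurable fun x => μ (ball x c) := by
  refine LowerSemicontinuous.measurable fun x a (ha : a < μ (ball x c)) => ?_
  have hmono : Monotone fun n : ℕ => ball x (c - 1 / (n + 1)) := fun m n hmn =>
    ball_subset_ball (by gcongr)
  have hunion : ⋃ n : ℕ, ball x (c - 1 / (n + 1)) = ball x c := by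
    ext y
    simp only [mem_iUnion, mem_ball]
    refine ⟨fun ⟨n, hn⟩ => hn.trans_le (by simp; positivity), fun hy => ?_⟩
    obtain ⟨n, hn⟩ := exists_nat_one_div_lt (sub_pos.2 hy)
    exact ⟨n, by linarith⟩
  rw [← hunion] at ha
  obtain ⟨n, hn⟩ := ((tendsto_measure_iUnion_atTop hmono).eventually (lt_mem_nhds ha)).exists
  filter_upwards [ball_mem_nhds x (Nat.one_div_pos_of_nat (n := n))] with y hy
  exact hn.trans_le (measure_mono (ball_subset_ball' (by rw [mem_ball'] at hy; linarith)))

lemma rpow_le_max_one_mul_rpow {r t : ℝ} (e : ℝ) (hr : 0 < r) (hrt : r / 2 ≤ t) (htr : t ≤ r) :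
    t ^ e ≤ max 1 (2 ^ (-e)) * r ^ e := by
  rcases le_or_gt 0 e with he | he
  · calc t ^ e ≤ r ^ e := Real.rpow_le_rpow (by linarith) htr he
      _ ≤ max 1 (2 ^ (-e)) * r ^ e := le_mul_of_one_le_left (by positivity) (le_max_left _ _)
  · calc t ^ e ≤ (r / 2) ^ e := Real.rpow_le_rpow_of_nonpos (by positivity) hrt he.le
      _ = 2 ^ (-e) * r ^ e := by
        rw [Real.div_rpow hr.le zero_le_two, Real.rpow_neg zero_le_two, div_eq_inv_mul]
      _ ≤ max 1 (2 ^ (-e)) * r ^ e := by gcongr; exact le_max_right _ _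

section Wolff

variable {G : Type*} [MetricSpace G] [MeasurableSpace G] (μ : Measure G) (x : G) {α p M r : ℝ}

lemma measure_ball_div_rpow_div_two_le_wolffPot (hp : 1 < p) (hr : 0 < r) :
    (μ (ball x (r / 2)) / ENNReal.ofReal (r ^ (M - α * p))) ^ (1 / (p - 1)) / 2 ≤
      ENNReal.ofReal (max 1 (2 ^ (-(M - α * p)))) ^ (1 / (p - 1)) * wolffPot μ α p M r x := by
  set e := M - α * p
  set K := max 1 ((2 : ℝ) ^ (-e))
  set c := (μ (ball x (r / 2)) / ENNReal.ofReal (r ^ e)) ^ (1 / (p - 1))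
  have hβ : 0 ≤ 1 / (p - 1) := by have := sub_pos.2 hp; positivity
  have hpoint : ∀ t ∈ Ioo (r / 2) r, c * ENNReal.ofReal r⁻¹ ≤ ENNReal.ofReal K ^ (1 / (p - 1)) *
      ((μ (ball x t) / ENNReal.ofReal (t ^ e)) ^ (1 / (p - 1)) * ENNReal.ofReal t⁻¹) := by
    rintro t ⟨hrt, htr⟩
    have ht : 0 < t := by linarith
    have hT0 : ENNReal.ofReal (t ^ e) ≠ 0 := by
      simp only [ne_eq, ENNReal.ofReal_eq_zero, not_le]
      positivity
    have hdiv : μ (ball x (r / 2)) / ENNReal.ofReal (r ^ e) ≤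
        ENNReal.ofReal K * (μ (ball x t) / ENNReal.ofReal (t ^ e)) := by
      refine ENNReal.div_le_of_le_mul ?_
      calc μ (ball x (r / 2)) ≤ μ (ball x t) := measure_mono (ball_subset_ball hrt.le)
        _ = μ (ball x t) / ENNReal.ofReal (t ^ e) * ENNReal.ofReal (t ^ e) :=
          (ENNReal.div_mul_cancel hT0 ofReal_ne_top).symm
        _ ≤ μ (ball x t) / ENNReal.ofReal (t ^ e) * ENNReal.ofReal (K * r ^ e) := by
          gcongr
          exact rpow_le_max_one_mul_rpow e hr hrt.le htr.le
        _ = ENNReal.ofReal K * (μ (ball x t) / ENNReal.ofReal (t ^ e)) *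
            ENNReal.ofReal (r ^ e) := by
          rw [ENNReal.ofReal_mul (by positivity)]
          ring
    calc c * ENNReal.ofReal r⁻¹
        ≤ (ENNReal.ofReal K * (μ (ball x t) / ENNReal.ofReal (t ^ e))) ^ (1 / (p - 1)) *
            ENNReal.ofReal t⁻¹ :=
          mul_le_mul' (ENNReal.rpow_le_rpow hdiv hβ)
            (ENNReal.ofReal_le_ofReal (inv_anti₀ ht htr.le))
      _ = _ := by rw [ENNReal.mul_rpow_of_nonneg _ _ hβ, mul_assoc]
  calc c / 2 = ∫⁻ _ in Ioo (r / 2) r, c * ENNReal.ofReal r⁻¹ := by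
        rw [setLIntegral_const, Real.volume_Ioo, mul_assoc, ← ENNReal.ofReal_mul (by positivity),
          show r⁻¹ * (r - r / 2) = 2⁻¹ by field_simp; ring, ENNReal.ofReal_inv_of_pos two_pos,
          ENNReal.ofReal_ofNat, div_eq_mul_inv]
    _ ≤ ∫⁻ t in Ioo (r / 2) r, ENNReal.ofReal K ^ (1 / (p - 1)) *
          ((μ (ball x t) / ENNReal.ofReal (t ^ e)) ^ (1 / (p - 1)) * ENNReal.ofReal t⁻¹) :=
        setLIntegral_mono' measurableSet_Ioo hpoint
    _ ≤ ∫⁻ t in Ioo 0 r, ENNReal.ofReal K ^ (1 / (p - 1)) *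
          ((μ (ball x t) / ENNReal.ofReal (t ^ e)) ^ (1 / (p - 1)) * ENNReal.ofReal t⁻¹) :=
        lintegral_mono_set (Ioo_subset_Ioo_left (by positivity))
    _ = ENNReal.ofReal K ^ (1 / (p - 1)) * wolffPot μ α p M r x :=
        lintegral_const_mul' _ _ (rpow_ne_top_of_nonneg hβ ofReal_ne_top)

lemma measure_ball_div_rpow_le_mul_wolffPot (hp : 1 < p) {q : ℝ} (hq : 0 < q) (hr : 0 < r) :
    (μ (ball x (r / 2)) / ENNReal.ofReal (r ^ (M - α * p))) ^ (q / (p - 1)) ≤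
      2 ^ q * ENNReal.ofReal (max 1 (2 ^ (-(M - α * p)))) ^ (q / (p - 1)) *
        wolffPot μ α p M r x ^ q := by
  have hW := (ENNReal.div_le_iff two_ne_zero ofNat_ne_top).1
    (measure_ball_div_rpow_div_two_le_wolffPot μ x hp hr (α := α) (M := M))
  calc (μ (ball x (r / 2)) / ENNReal.ofReal (r ^ (M - α * p))) ^ (q / (p - 1))
      = ((μ (ball x (r / 2)) / ENNReal.ofReal (r ^ (M - α * p))) ^ (1 / (p - 1))) ^ q := by
        rw [← ENNReal.rpow_mul, one_div_mul_eq_div]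
    _ ≤ (ENNReal.ofReal (max 1 (2 ^ (-(M - α * p)))) ^ (1 / (p - 1)) *
          wolffPot μ α p M r x * 2) ^ q := by gcongr
    _ = _ := by
        rw [ENNReal.mul_rpow_of_nonneg _ _ hq.le, ENNReal.mul_rpow_of_nonneg _ _ hq.le,
          ← ENNReal.rpow_mul, one_div_mul_eq_div]
        ring

end Wolff

def HasBallVolume {G : Type*} [MetricSpace G] [MeasurableSpace G] (vol : Measure G)
    (cA : ℝ≥0∞) (M : ℝ) : Prop :=
  ∀ (x : G) (R : ℝ), 0 < R → vol (ball x R) = cA * ENNReal.ofReal (R ^ M)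

namespace HasBallVolume

variable {G : Type*} [MetricSpace G] [MeasurableSpace G] {vol : Measure G} {cA : ℝ≥0∞} {M : ℝ}

lemma isLocallyFiniteMeasure (hvol : HasBallVolume vol cA M) (hcA' : cA < ∞) :
    IsLocallyFiniteMeasure vol :=
  ⟨fun x => ⟨ball x 1, ball_mem_nhds x one_pos, by
    rw [hvol x 1 one_pos]
    exact mul_lt_top hcA' ofReal_lt_top⟩⟩

variable [OpensMeasurableSpace G]

lemma ncard_le_of_isSeparated (hvol : HasBallVolume vol cA M) (hcA : 0 < cA) (hcA' : cA < ∞)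
    {x : G} {R ε : ℝ} (hR : 0 ≤ R) (hε : 0 < ε) {C : Set G} (hCfin : C.Finite)
    (hCx : C ⊆ ball x R) (hC : IsSeparated (ENNReal.ofReal ε) C) :
    (C.ncard : ℝ) ≤ (2 * R / ε + 1) ^ M := by
  classical
  set T := hCfin.toFinset
  have hdisj : (T : Set G).PairwiseDisjoint fun y => ball y (ε / 2) := by
    intro a ha b hb hab
    have hsep : ε < dist a b := by
      simpa [edist_dist, ENNReal.ofReal_lt_ofReal_iff_of_nonneg hε.le] using
        hC (by simpa [T] using ha) (by simpa [T] using hb) hab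
    refine disjoint_left.mpr fun z hza hzb => ?_
    rw [mem_ball] at hza hzb
    linarith [dist_triangle_left a b z]
  have hunion : (⋃ y ∈ T, ball y (ε / 2)) ⊆ ball x (R + ε / 2) :=
    iUnion₂_subset fun y hy => ball_subset_ball' <| by
      have := hCx (by simpa [T] using hy)
      rw [mem_ball] at this
      linarith
  have hvolume : (T.card : ℝ≥0∞) * (cA * ENNReal.ofReal ((ε / 2) ^ M))
      ≤ cA * ENNReal.ofReal ((R + ε / 2) ^ M) :=
    calc (T.card : ℝ≥0∞) * (cA * ENNReal.ofReal ((ε / 2) ^ M))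
        = ∑ y ∈ T, vol (ball y (ε / 2)) := by
          rw [Finset.sum_congr rfl fun y _ => hvol y (ε / 2) (by positivity), Finset.sum_const,
            nsmul_eq_mul]
      _ = vol (⋃ y ∈ T, ball y (ε / 2)) :=
          (measure_biUnion_finset hdisj fun _ _ => measurableSet_ball).symm
      _ ≤ cA * ENNReal.ofReal ((R + ε / 2) ^ M) := by
          rw [← hvol x _ (by positivity)]
          exact measure_mono hunion
  rw [← ENNReal.le_div_iff_mul_le (Or.inl (by simp [hcA.ne']; positivity))
      (Or.inl (by finiteness)),
    ENNReal.mul_div_mul_left _ _ hcA.ne' hcA'.ne,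
    ← ENNReal.ofReal_div_of_pos (by positivity), ← Real.div_rpow (by positivity) (by positivity),
    show (R + ε / 2) / (ε / 2) = 2 * R / ε + 1 by field_simp] at hvolume
  rw [Set.ncard_eq_toFinset_card C hCfin]
  exact_mod_cast (ENNReal.ofReal_le_ofReal_iff (by positivity)).1 (by simpa using hvolume)

lemma packingNumber_ball_le (hvol : HasBallVolume vol cA M) (hcA : 0 < cA) (hcA' : cA < ∞)
    (x : G) {R : ℝ} {ε : NNReal} (hR : 0 ≤ R) (hε : 0 < ε) :
    packingNumber ε (ball x R) ≤ ⌊(2 * R / ε + 1) ^ M⌋₊ := by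
  refine iSup₂_le fun C hCx => iSup_le fun hC => ?_
  set n := ⌊(2 * R / ε + 1) ^ M⌋₊
  by_contra! hlt
  obtain ⟨D, hDC, hD⟩ := Set.exists_subset_encard_eq (Order.add_one_le_of_lt hlt)
  have hDfin : D.Finite := Set.finite_of_encard_eq_coe (k := n + 1) (by simpa using hD)
  have hDcard : D.ncard = n + 1 := by
    rw [← ENat.natCast_inj, hDfin.cast_ncard_eq, hD]
    simp
  have hcard := hvol.ncard_le_of_isSeparated hcA hcA' hR hε hDfin (hDC.trans hCx)
    (by simpa using hC.subset hDC)
  rw [hDcard, Nat.cast_succ] at hcard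
  exact hcard.not_gt (Nat.lt_floor_add_one _)

lemma exists_finset_isCover_ball (hvol : HasBallVolume vol cA M) (hcA : 0 < cA) (hcA' : cA < ∞)
    (x : G) {R ε : ℝ} (hR : 0 ≤ R) (hε : 0 < ε) :
    ∃ T : Finset G, ↑T ⊆ ball x R ∧ ball x R ⊆ ⋃ y ∈ T, closedBall y ε ∧
      (T.card : ℝ) ≤ (2 * R / ε + 1) ^ M := by
  lift ε to NNReal using hε.le
  have hpack := hvol.packingNumber_ball_le hcA hcA' x hR (by exact_mod_cast hε)
  have hfin : packingNumber ε (ball x R) ≠ ⊤ := ne_top_of_le_ne_top (by simp) hpack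
  have hTfin : (maximalSeparatedSet ε (ball x R)).Finite := by
    rw [← Set.encard_ne_top_iff, encard_maximalSeparatedSet hfin]
    exact hfin
  refine ⟨hTfin.toFinset, by simpa using maximalSeparatedSet_subset, ?_, ?_⟩
  · simpa [← isCover_iff_subset_iUnion_closedBall] using isCover_maximalSeparatedSet hfin
  · rw [← Set.ncard_eq_toFinset_card _ hTfin]
    refine le_trans ?_ (Nat.floor_le (by positivity))
    have : (maximalSeparatedSet ε (ball x R)).encard ≤ ⌊(2 * R / ε + 1) ^ M⌋₊ :=
      (encard_maximalSeparatedSet hfin).trans_le hpack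
    rw [← hTfin.cast_ncard_eq] at this
    exact_mod_cast this

lemma totallyBounded_ball (hvol : HasBallVolume vol cA M) (hcA : 0 < cA) (hcA' : cA < ∞)
    (x : G) {R : ℝ} (hR : 0 ≤ R) : TotallyBounded (ball x R) := by
  refine totallyBounded_iff.2 fun ε hε => ?_
  obtain ⟨T, -, hcover, -⟩ := hvol.exists_finset_isCover_ball hcA hcA' x hR (half_pos hε)
  exact ⟨T, T.finite_toSet, hcover.trans <| iUnion₂_mono fun y _ =>
    closedBall_subset_ball (half_lt_self hε)⟩

lemma secondCountableTopology (hvol : HasBallVolume vol cA M) (hcA : 0 < cA) (hcA' : cA < ∞) :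
    SecondCountableTopology G := by
  suffices SeparableSpace G from UniformSpace.secondCountable_of_separable G
  rcases isEmpty_or_nonempty G with hG | ⟨⟨x₀⟩⟩
  · infer_instance
  rw [← isSeparable_univ_iff, ← iUnion_ball_nat x₀]
  exact .iUnion fun n => (hvol.totallyBounded_ball hcA hcA' x₀ n.cast_nonneg).isSeparable

lemma lintegral_setLIntegral_ball [SecondCountableTopology G] [SFinite vol]
    (hvol : HasBallVolume vol cA M) {g : G → ℝ≥0∞} (hg : Measurable g) {ρ : ℝ} (hρ : 0 < ρ) :
    ∫⁻ x, ∫⁻ z in ball x ρ, g z ∂vol ∂vol = cA * ENNReal.ofReal (ρ ^ M) * ∫⁻ z, g z ∂vol := by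
  have hswap (x z : G) : (ball x ρ).indicator g z = (ball z ρ).indicator (fun _ => g z) x := by
    simp only [indicator, mem_ball, dist_comm]
  have hmeas : Measurable (Function.uncurry fun x z => (ball x ρ).indicator g z) := by
    have hS : MeasurableSet {p : G × G | dist p.2 p.1 < ρ} :=
      measurableSet_lt (measurable_snd.dist measurable_fst) measurable_const
    convert (hg.comp measurable_snd).indicator hS using 1
    ext ⟨x, z⟩
    simp [indicator, mem_ball]
  calc ∫⁻ x, ∫⁻ z in ball x ρ, g z ∂vol ∂vol
      = ∫⁻ x, ∫⁻ z, (ball x ρ).indicator g z ∂vol ∂vol := by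
        simp_rw [lintegral_indicator measurableSet_ball]
    _ = ∫⁻ z, ∫⁻ x, (ball z ρ).indicator (fun _ => g z) x ∂vol ∂vol := by
        simp_rw [lintegral_lintegral_swap hmeas.aemeasurable, hswap]
    _ = ∫⁻ z, cA * ENNReal.ofReal (ρ ^ M) * g z ∂vol := by
        simp_rw [lintegral_indicator_const measurableSet_ball, hvol _ ρ hρ, mul_comm (g _)]
    _ = cA * ENNReal.ofReal (ρ ^ M) * ∫⁻ z, g z ∂vol := lintegral_const_mul _ hg

lemma mul_measure_ball_rpow_le (hvol : HasBallVolume vol cA M) (hcA : 0 < cA) (hcA' : cA < ∞)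
    (μ : Measure G) (x : G) {k ε s : ℝ} (hk : 0 < k) (hε : 0 < ε) (hs : 0 ≤ s) :
    cA * ENNReal.ofReal (ε ^ M) * μ (ball x (k * ε)) ^ s ≤
      ENNReal.ofReal ((2 * k + 1) ^ M) ^ s *
        ∫⁻ z in ball x ((k + 1) * ε), μ (ball z (2 * ε)) ^ s ∂vol := by
  obtain ⟨T, hTx, hcover, hcard⟩ :=
    hvol.exists_finset_isCover_ball hcA hcA' x (by positivity : 0 ≤ k * ε) hε
  obtain ⟨y, hyT, -⟩ := mem_iUnion₂.1 (hcover (mem_ball_self (by positivity)))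
  obtain ⟨y, hyT, hymax⟩ := T.exists_max_image (fun t => μ (closedBall t ε)) ⟨y, hyT⟩
  have hcard' : (T.card : ℝ≥0∞) ≤ ENNReal.ofReal ((2 * k + 1) ^ M) := by
    rw [← ENNReal.ofReal_natCast]
    refine ENNReal.ofReal_le_ofReal (hcard.trans_eq ?_)
    field_simp
  have hμx : μ (ball x (k * ε)) ≤ T.card * μ (closedBall y ε) :=
    calc μ (ball x (k * ε)) ≤ μ (⋃ t ∈ T, closedBall t ε) := measure_mono hcover
      _ ≤ ∑ t ∈ T, μ (closedBall t ε) := measure_biUnion_finset_le _ _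
      _ ≤ T.card * μ (closedBall y ε) := by simpa using Finset.sum_le_card_nsmul _ _ _ hymax
  have hμy : cA * ENNReal.ofReal (ε ^ M) * μ (closedBall y ε) ^ s ≤
      ∫⁻ z in ball x ((k + 1) * ε), μ (ball z (2 * ε)) ^ s ∂vol :=
    calc cA * ENNReal.ofReal (ε ^ M) * μ (closedBall y ε) ^ s
        = ∫⁻ _ in ball y ε, μ (closedBall y ε) ^ s ∂vol := by
          rw [setLIntegral_const, hvol y ε hε, mul_comm]
      _ ≤ ∫⁻ z in ball y ε, μ (ball z (2 * ε)) ^ s ∂vol :=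
          setLIntegral_mono' measurableSet_ball fun z hz => by
            gcongr
            exact closedBall_subset_ball' (by rw [mem_ball'] at hz; linarith)
      _ ≤ ∫⁻ z in ball x ((k + 1) * ε), μ (ball z (2 * ε)) ^ s ∂vol :=
          lintegral_mono_set <| ball_subset_ball' <| by
            have := hTx hyT
            rw [mem_ball] at this
            linarith
  calc cA * ENNReal.ofReal (ε ^ M) * μ (ball x (k * ε)) ^ s
      ≤ cA * ENNReal.ofReal (ε ^ M) * (T.card * μ (closedBall y ε)) ^ s := by gcongr
    _ = (T.card : ℝ≥0∞) ^ s * (cA * ENNReal.ofReal (ε ^ M) * μ (closedBall y ε) ^ s) := by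
        rw [ENNReal.mul_rpow_of_nonneg _ _ hs]
        ring
    _ ≤ _ := by gcongr

lemma lintegral_measure_ball_rpow_le (hvol : HasBallVolume vol cA M) (hcA : 0 < cA)
    (hcA' : cA < ∞) (μ : Measure G) {k ε s : ℝ} (hk : 0 < k) (hε : 0 < ε) (hs : 0 ≤ s) :
    ∫⁻ x, μ (ball x (k * ε)) ^ s ∂vol ≤
      ENNReal.ofReal ((2 * k + 1) ^ M) ^ s * ENNReal.ofReal ((k + 1) ^ M) *
        ∫⁻ z, μ (ball z (2 * ε)) ^ s ∂vol := by
  -- Tonelli on `G × G` below needs `dist` measurable there and `vol` σ-finite.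
  have := hvol.secondCountableTopology hcA hcA'
  have := hvol.isLocallyFiniteMeasure hcA'
  set c := cA * ENNReal.ofReal (ε ^ M)
  have hc0 : c ≠ 0 := by
    simp only [c, ne_eq, mul_eq_zero, hcA.ne', ENNReal.ofReal_eq_zero, not_le, false_or]
    positivity
  have hctop : c ≠ ∞ := mul_ne_top hcA'.ne ofReal_ne_top
  have hNtop : ENNReal.ofReal ((2 * k + 1) ^ M) ^ s ≠ ∞ := rpow_ne_top_of_nonneg hs ofReal_ne_top
  have hg : Measurable fun z => μ (ball z (2 * ε)) ^ s :=
    (measurable_measure_ball μ _).pow_const s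
  refine (ENNReal.mul_le_mul_iff_right hc0 hctop).1 ?_
  calc c * ∫⁻ x, μ (ball x (k * ε)) ^ s ∂vol
      = ∫⁻ x, c * μ (ball x (k * ε)) ^ s ∂vol := (lintegral_const_mul' _ _ hctop).symm
    _ ≤ ∫⁻ x, ENNReal.ofReal ((2 * k + 1) ^ M) ^ s *
          ∫⁻ z in ball x ((k + 1) * ε), μ (ball z (2 * ε)) ^ s ∂vol ∂vol :=
        lintegral_mono fun x => hvol.mul_measure_ball_rpow_le hcA hcA' μ x hk hε hs
    _ = ENNReal.ofReal ((2 * k + 1) ^ M) ^ s * (cA * ENNReal.ofReal (((k + 1) * ε) ^ M) *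
          ∫⁻ z, μ (ball z (2 * ε)) ^ s ∂vol) := by
        rw [lintegral_const_mul' _ _ hNtop, hvol.lintegral_setLIntegral_ball hg (by positivity)]
    _ = c * (ENNReal.ofReal ((2 * k + 1) ^ M) ^ s * ENNReal.ofReal ((k + 1) ^ M) *
          ∫⁻ z, μ (ball z (2 * ε)) ^ s ∂vol) := by
        rw [Real.mul_rpow (by positivity) hε.le, ENNReal.ofReal_mul (by positivity)]
        ring

end HasBallVolume

theorem stmt_19_general (M α p q lam : ℝ) (cA : ℝ≥0∞) (hp : 1 < p) (hq : p - 1 < q)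
    (hlam : lam = 8) (hcA : 0 < cA) (hcA' : cA < ∞) :
    ∃ C : ℝ≥0∞, 0 < C ∧ C < ∞ ∧
      ∀ (G : Type) (_ : MetricSpace G) (mG : MeasurableSpace G) (_ : BorelSpace G)
        (vol : Measure G)
        (_ : ∀ (x : G) (R : ℝ), 0 < R → vol (Metric.ball x R) = cA * ENNReal.ofReal (R ^ M))
        (r : ℝ) (_ : 0 < r) (μ : Measure G),
        (∫⁻ x, (μ (Metric.ball x (lam ^ (3 : ℕ) * r)) /
            ENNReal.ofReal (r ^ (M - α * p))) ^ (q / (p - 1)) ∂vol) ≤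
          C * ∫⁻ x, (wolffPot μ α p M r x) ^ q ∂vol := by
  subst hlam
  have hq0 : 0 < q := by linarith
  have hs : 0 ≤ q / (p - 1) := div_nonneg hq0.le (by linarith)
  set s := q / (p - 1)
  set K := max 1 ((2 : ℝ) ^ (-(M - α * p)))
  set C₁ := ENNReal.ofReal ((2 * 2048 + 1) ^ M) ^ s * ENNReal.ofReal ((2048 + 1) ^ M)
  set C₂ := 2 ^ q * ENNReal.ofReal K ^ s
  have hC₂ : C₂ ≠ ∞ := mul_ne_top (by finiteness) (rpow_ne_top_of_nonneg hs ofReal_ne_top)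
  refine ⟨C₁ * C₂, by positivity, mul_lt_top (by finiteness) hC₂.lt_top, ?_⟩
  intro G _ _ _ vol (hvol : HasBallVolume vol cA M) r hr μ
  set ν := (ENNReal.ofReal (r ^ (M - α * p)))⁻¹ • μ
  have hν (y : G) (ρ : ℝ) : μ (ball y ρ) / ENNReal.ofReal (r ^ (M - α * p)) = ν (ball y ρ) := by
    simp [ν, ENNReal.div_eq_inv_mul]
  calc ∫⁻ x, (μ (ball x (8 ^ 3 * r)) / ENNReal.ofReal (r ^ (M - α * p))) ^ s ∂vol
      = ∫⁻ x, ν (ball x (2048 * (r / 4))) ^ s ∂vol := by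
        simp_rw [hν]
        ring_nf
    _ ≤ C₁ * ∫⁻ z, ν (ball z (2 * (r / 4))) ^ s ∂vol :=
        hvol.lintegral_measure_ball_rpow_le hcA hcA' ν (by norm_num) (by positivity) hs
    _ ≤ C₁ * ∫⁻ z, C₂ * wolffPot μ α p M r z ^ q ∂vol := by
        gcongr with z
        rw [← hν, show 2 * (r / 4) = r / 2 by ring]
        exact measure_ball_div_rpow_le_mul_wolffPot μ z hp hq0 hr
    _ = C₁ * C₂ * ∫⁻ z, wolffPot μ α p M r z ^ q ∂vol := by
        rw [lintegral_const_mul' _ _ hC₂, ← mul_assoc]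

/-- `∫_G [μ(B_{λ³r}(x))/r^{M-αp}]^{q/(p-1)} dx ≤ C ∫_G [W_{α,p}^r μ(x)]^q dx`,
with `C` independent of `r` and `μ`, on an Ahlfors `M`-regular metric measure space
(modelling a Carnot group of homogeneous dimension `M`), `λ = 8`. -/
theorem stmt_19 (M α p q lam : ℝ) (cA : ℝ≥0∞) (hα : 0 < α) (hp : 1 < p) (hq : p - 1 < q)
    (hM : 0 < M) (hlam : lam = 8) (hcA : 0 < cA) (hcA' : cA < ∞) :
    ∃ C : ℝ≥0∞, 0 < C ∧ C < ∞ ∧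
      ∀ (G : Type) (_ : MetricSpace G) (mG : MeasurableSpace G) (_ : BorelSpace G)
        (vol : Measure G)
        (_ : ∀ (x : G) (R : ℝ), 0 < R → vol (Metric.ball x R) = cA * ENNReal.ofReal (R ^ M))
        (r : ℝ) (_ : 0 < r) (μ : Measure G),
        (∫⁻ x, (μ (Metric.ball x (lam ^ (3 : ℕ) * r)) /
            ENNReal.ofReal (r ^ (M - α * p))) ^ (q / (p - 1)) ∂vol) ≤
          C * ∫⁻ x, (wolffPot μ α p M r x) ^ q ∂vol :=
  stmt_19_general M α p q lam cA hp hq hlam hcA hcA'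
end
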